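/- arXiv:1905.08683 — 2 statements merged into one kernel-verified Lean document; each statement's English description precedes it below -/
import Mathlib

section
/- Let G and H be finite connected simple graphs, fix a root (r_G, r_H) of G□H, fix v ∈ V(H), and let S be a set of neighbors of v in H with 1 ≤ |S| ≤ π(H) − 3. Let c be a pebbling configuration on G□H, let s_v be the support size of c restricted to the slice G_v, and suppose c̃_v ≥ 2·Σ_{j∈S} (π(G) − extra_j) + π₂(G, s_v) + (π(H) − 2 − |S|)·π(G). Then c is (r_G, r_H)-solvable. -/
open SimpleGraph Finset

/-- A single pebbling move on `G`: remove two pebbles from a vertex `v` with at least two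
pebbles and add one pebble to an adjacent vertex `w`. -/
def PebblingMove {V : Type*} (G : SimpleGraph V) (c c' : V → ℕ) : Prop :=
  ∃ v w, G.Adj v w ∧ 2 ≤ c v ∧ c' v = c v - 2 ∧ c' w = c w + 1 ∧
    ∀ u, u ≠ v → u ≠ w → c' u = c u

/-- Some finite sequence of pebbling moves starting from `c` places at least `t` pebbles
on the vertex `r`. -/
def NSolvable {V : Type*} (G : SimpleGraph V) (c : V → ℕ) (r : V) (t : ℕ) : Prop :=
  ∃ c', Relation.ReflTransGen (PebblingMove G) c c' ∧ t ≤ c' r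

/-- A configuration `c` is `r`-solvable. -/
def Solvable {V : Type*} (G : SimpleGraph V) (c : V → ℕ) (r : V) : Prop :=
  NSolvable G c r 1

/-- The pebbling number `π(G)`: least `k` such that every configuration of size `k` is
`r`-solvable for every root `r`. -/
noncomputable def pebblingNumber {V : Type*} (G : SimpleGraph V) [Fintype V] : ℕ :=
  sInf {k | ∀ c : V → ℕ, (∑ v, c v) = k → ∀ r, Solvable G c r}

/-- The 2-pebbling number `π₂(G, s)`: least `m` such that for every root `r`, every
configuration of size at least `m` with support of size exactly `s` can place two pebbles
on `r`. -/
noncomputable def twoPebblingNumber {V : Type*} (G : SimpleGraph V) [Fintype V] (s : ℕ) : ℕ :=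
  sInf {m | ∀ (r : V) (c : V → ℕ), m ≤ ∑ v, c v →
    (Finset.univ.filter fun v => 1 ≤ c v).card = s → NSolvable G c r 2}

/-- The 2-pebbling number with the convention `π₂(G, 0) = 2π(G)`. -/
noncomputable def twoPebblingNumber' {V : Type*} (G : SimpleGraph V) [Fintype V] (s : ℕ) : ℕ :=
  if s = 0 then 2 * pebblingNumber G else twoPebblingNumber G s

/-! Split the slice `G_v` into three parts and move them independently (reachability is
additive in the configuration). A reserve with the support of `G_v` and exactly `π₂(G, s_v)`
pebbles puts two pebbles on `(r_G, v)`. For each `j ∈ S`, `π(G) - extra_j` pairs cross the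
edge `vj` and bring `G_j` up to at least `π(G)` pebbles, hence one pebble on `(r_G, j)`. The
remaining `K·π(G)` pebbles, `K = π(H) - 2 - |S| ≥ 1`, put `K` more pebbles on `(r_G, v)`; since
`|V(G)| ≤ π(G) ≤ K·π(G)` they also absorb the parity loss of pairing. The copy of `H` through
`r_G` then carries `2 + |S| + K = π(H)` pebbles. -/

section Pebbling

variable {V W : Type*} {Γ : SimpleGraph V} {Δ : SimpleGraph W}

lemma pebblingMove_iff [DecidableEq V] {c c' : V → ℕ} :
    PebblingMove Γ c c' ↔ ∃ v w, Γ.Adj v w ∧ c' + Pi.single v 2 = c + Pi.single w 1 := by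
  constructor
  · rintro ⟨v, w, hvw, h2, hv, hw, ho⟩
    refine ⟨v, w, hvw, funext fun u => ?_⟩
    have hwv := hvw.ne'
    by_cases huv : u = v
    · subst huv
      simp only [Pi.add_apply, Pi.single_eq_same, Pi.single_eq_of_ne' hwv, add_zero]
      omega
    by_cases huw : u = w
    · subst huw; simp [huv, hw]
    · simp [huv, huw, ho u huv huw]
  · rintro ⟨v, w, hvw, h⟩
    have hwv := hvw.ne'
    have hv := congrFun h v
    have hw := congrFun h w
    simp only [Pi.add_apply, Pi.single_eq_same, Pi.single_eq_of_ne hwv,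
      Pi.single_eq_of_ne' hwv, add_zero] at hv hw
    refine ⟨v, w, hvw, by omega, by omega, by omega, fun u huv huw => ?_⟩
    simpa [huv, huw] using congrFun h u

lemma PebblingMove.add_right {c c' : V → ℕ} (h : PebblingMove Γ c c') (e : V → ℕ) :
    PebblingMove Γ (c + e) (c' + e) := by
  classical
  obtain ⟨v, w, hvw, h⟩ := pebblingMove_iff.1 h
  exact pebblingMove_iff.2 ⟨v, w, hvw, by rw [add_right_comm, h, add_right_comm]⟩

def CanReach (Γ : SimpleGraph V) (c d : V → ℕ) : Prop :=
  ∃ c', Relation.ReflTransGen (PebblingMove Γ) c c' ∧ d ≤ c'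

lemma Pi.single_le_iff [DecidableEq V] {r : V} {t : ℕ} {c : V → ℕ} :
    Pi.single r t ≤ c ↔ t ≤ c r := by
  refine ⟨fun h => by simpa using h r, fun h u => ?_⟩
  by_cases hu : u = r
  · subst hu; simpa using h
  · simp [hu]

lemma nsolvable_iff_canReach [DecidableEq V] {c : V → ℕ} {r : V} {t : ℕ} :
    NSolvable Γ c r t ↔ CanReach Γ c (Pi.single r t) := by
  simp only [NSolvable, CanReach, Pi.single_le_iff]

lemma eq_of_reflTransGen_pebblingMove {c d : V → ℕ}
    (h : Relation.ReflTransGen (PebblingMove Γ) c d) (hc : ∀ u, c u ≤ 1) : d = c := by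
  rcases h.cases_head with rfl | ⟨_, ⟨v, _, _, h2, _⟩, _⟩
  · rfl
  · exact absurd (hc v) (by omega)

namespace CanReach

lemma of_le {c d : V → ℕ} (h : d ≤ c) : CanReach Γ c d := ⟨c, .refl, h⟩

lemma add {c₁ c₂ d₁ d₂ : V → ℕ} (h₁ : CanReach Γ c₁ d₁) (h₂ : CanReach Γ c₂ d₂) :
    CanReach Γ (c₁ + c₂) (d₁ + d₂) := by
  obtain ⟨c₁', r₁, le₁⟩ := h₁
  obtain ⟨c₂', r₂, le₂⟩ := h₂
  have r₁' := r₁.lift (· + c₂) fun _ _ h => h.add_right c₂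
  have r₂' := r₂.lift (c₁' + ·) fun a b h => by simpa only [add_comm c₁'] using h.add_right c₁'
  exact ⟨c₁' + c₂', r₁'.trans r₂', add_le_add le₁ le₂⟩

lemma trans {c d e : V → ℕ} (h₁ : CanReach Γ c d) (h₂ : CanReach Γ d e) : CanReach Γ c e := by
  obtain ⟨c', r₁, le₁⟩ := h₁
  obtain ⟨d', r₂, le₂⟩ := h₂.add (of_le (le_refl (c' - d)))
  refine ⟨d', r₁.trans ?_, le_trans le_self_add le₂⟩
  rwa [add_tsub_cancel_of_le le₁] at r₂

lemma mono {c c₂ d d₂ : V → ℕ} (h : CanReach Γ c d) (hc : c ≤ c₂) (hd : d₂ ≤ d) :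
    CanReach Γ c₂ d₂ :=
  ((of_le hc).trans h).trans (of_le hd)

lemma sum {ι : Type*} (s : Finset ι) {c d : ι → V → ℕ} (h : ∀ i ∈ s, CanReach Γ (c i) (d i)) :
    CanReach Γ (∑ i ∈ s, c i) (∑ i ∈ s, d i) := by
  classical
  induction s using Finset.induction_on with
  | empty => exact of_le le_rfl
  | insert a s ha ih =>
    rw [Finset.sum_insert ha, Finset.sum_insert ha]
    exact (h a (Finset.mem_insert_self a s)).add (ih fun i hi => h i (Finset.mem_insert_of_mem hi))

lemma le_of_le_one {c d : V → ℕ} (h : CanReach Γ c d) (hc : ∀ u, c u ≤ 1) : d ≤ c := by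
  obtain ⟨c', hr, hle⟩ := h
  rwa [eq_of_reflTransGen_pebblingMove hr hc] at hle

end CanReach

lemma canReach_single_of_adj [DecidableEq V] {a b : V} (hab : Γ.Adj a b) (k : ℕ) :
    CanReach Γ (Pi.single a (2 * k)) (Pi.single b k) := by
  induction k with
  | zero => exact CanReach.of_le (by simp)
  | succ k ih =>
    have hmove : PebblingMove Γ (Pi.single a 2) (Pi.single b 1) :=
      pebblingMove_iff.2 ⟨a, b, hab, add_comm _ _⟩
    simpa only [mul_add, Pi.single_add, mul_one]
      using ih.add (⟨_, .single hmove, le_rfl⟩ : CanReach Γ _ _)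

lemma canReach_single_of_walk [DecidableEq V] {a b : V} (p : Γ.Walk a b) (k : ℕ) :
    CanReach Γ (Pi.single a (2 ^ p.length * k)) (Pi.single b k) := by
  induction p with
  | nil => simpa using CanReach.of_le le_rfl
  | cons hadj p ih =>
    rw [Walk.length_cons, pow_succ, mul_comm _ 2, mul_assoc]
    exact (canReach_single_of_adj hadj _).trans ih

section Pushforward

variable [Fintype V] [DecidableEq W]

def pushforward (φ : V → W) : (V → ℕ) →+ (W → ℕ) :=
  ∑ a, (AddMonoidHom.single _ (φ a)).comp (Pi.evalAddMonoidHom _ a)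

lemma pushforward_apply (φ : V → W) (c : V → ℕ) :
    pushforward φ c = ∑ a, Pi.single (φ a) (c a) := by
  simp [pushforward]

lemma pushforward_single [DecidableEq V] (φ : V → W) (a : V) (k : ℕ) :
    pushforward φ (Pi.single a k) = Pi.single (φ a) k := by
  rw [pushforward_apply, Finset.sum_eq_single a (fun b _ hb => by simp [hb]) (by simp)]
  simp

lemma pushforward_mono (φ : V → W) {c d : V → ℕ} (h : c ≤ d) :
    pushforward φ c ≤ pushforward φ d := by
  rw [← add_tsub_cancel_of_le h, map_add]
  exact le_self_add

lemma PebblingMove.map (φ : Γ →g Δ) {c c' : V → ℕ} (h : PebblingMove Γ c c') :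
    PebblingMove Δ (pushforward φ c) (pushforward φ c') := by
  classical
  obtain ⟨v, w, hvw, h⟩ := pebblingMove_iff.1 h
  refine pebblingMove_iff.2 ⟨φ v, φ w, φ.map_adj hvw, ?_⟩
  simpa only [map_add, pushforward_single] using congrArg (pushforward φ) h

lemma CanReach.map (φ : Γ →g Δ) {c d : V → ℕ} (h : CanReach Γ c d) :
    CanReach Δ (pushforward φ c) (pushforward φ d) := by
  obtain ⟨c', hr, hle⟩ := h
  exact ⟨_, hr.lift (pushforward φ) fun _ _ h => h.map φ, pushforward_mono φ hle⟩

lemma canReach_pushforward_two_nsmul {φ ψ : V → W} (h : ∀ a, Δ.Adj (φ a) (ψ a)) (f : V → ℕ) :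
    CanReach Δ (pushforward φ (2 • f)) (pushforward ψ f) := by
  rw [pushforward_apply, pushforward_apply]
  exact CanReach.sum _ fun a _ => canReach_single_of_adj (h a) (f a)

end Pushforward

section Finite

variable [Fintype V]

lemma exists_le_le_sum_eq {b c : V → ℕ} (hbc : b ≤ c) {m : ℕ} (hb : ∑ u, b u ≤ m)
    (hc : m ≤ ∑ u, c u) : ∃ c₀, b ≤ c₀ ∧ c₀ ≤ c ∧ ∑ u, c₀ u = m := by
  classical
  obtain ⟨k, rfl⟩ := Nat.exists_eq_add_of_le hb
  induction k generalizing b with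
  | zero => exact ⟨b, le_rfl, hbc, rfl⟩
  | succ k ih =>
    obtain ⟨u, hu⟩ : ∃ u, b u < c u := by
      by_contra! hcb
      have := Finset.sum_le_sum fun u (_ : u ∈ Finset.univ) => hcb u
      omega
    have hb' : b + Pi.single u 1 ≤ c := fun x => by
      by_cases hx : x = u
      · subst hx; simpa using hu
      · simpa [hx] using hbc x
    have hsum : ∑ x, (b + Pi.single u 1 : V → ℕ) x = ∑ x, b x + 1 := by
      simp [Finset.sum_add_distrib]
    obtain ⟨c₀, hb₀, hc₀, hs₀⟩ := ih hb' (by omega) (by omega)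
    exact ⟨c₀, le_trans le_self_add hb₀, hc₀, by omega⟩

lemma sum_tsub_apply {x y : V → ℕ} (h : x ≤ y) : ∑ u, (y - x) u = ∑ u, y u - ∑ u, x u :=
  Finset.sum_tsub_distrib _ fun u _ => h u

lemma exists_le_sum_eq {c : V → ℕ} {m : ℕ} (h : m ≤ ∑ u, c u) :
    ∃ c₀ ≤ c, ∑ u, c₀ u = m := by
  obtain ⟨c₀, -, hc₀, hs⟩ := exists_le_le_sum_eq (fun _ => Nat.zero_le _) (by simp) h
  exact ⟨c₀, hc₀, hs⟩

lemma exists_le_sum_eq_of_filter_one_le {c : V → ℕ} {m : ℕ}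
    (hm : (univ.filter fun u => 1 ≤ c u).card ≤ m) (h : m ≤ ∑ u, c u) :
    ∃ c₀ ≤ c, (univ.filter fun u => 1 ≤ c₀ u) = (univ.filter fun u => 1 ≤ c u) ∧
      ∑ u, c₀ u = m := by
  let b : V → ℕ := fun u => if 1 ≤ c u then 1 else 0
  have hbc : b ≤ c := fun u => by by_cases hu : 1 ≤ c u <;> simp [b, hu]
  obtain ⟨c₀, hb₀, hc₀, hs⟩ := exists_le_le_sum_eq hbc (by simpa [b, Finset.sum_boole]) h
  refine ⟨c₀, hc₀, Finset.filter_congr fun u _ => ⟨fun hu => le_trans hu (hc₀ u), fun hu => ?_⟩, hs⟩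
  simpa [b, hu] using hb₀ u

lemma canReach_single_of_card_mul_le [DecidableEq V] (hΓ : Γ.Connected) {c : V → ℕ} (r : V)
    {t : ℕ}
    (h : Fintype.card V * (2 ^ Fintype.card V * t) ≤ ∑ u, c u) :
    CanReach Γ c (Pi.single r t) := by
  obtain ⟨u, -, hu⟩ := Finset.exists_le_of_sum_le (f := fun _ => 2 ^ Fintype.card V * t)
    (Finset.univ_nonempty_iff.2 hΓ.nonempty) (by simpa using h)
  let p := (hΓ.preconnected u r).some.toPath
  have hp : 2 ^ (p : Γ.Walk u r).length * t ≤ c u :=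
    le_trans (Nat.mul_le_mul_right t (Nat.pow_le_pow_right two_pos p.2.length_lt.le)) hu
  exact (canReach_single_of_walk (p : Γ.Walk u r) t).mono (Pi.single_le_iff.2 hp) le_rfl

end Finite

section PebblingNumber

variable [Fintype V] [DecidableEq V]

lemma canReach_single_one_of_pebblingNumber_le (hΓ : Γ.Connected) {c : V → ℕ} (r : V)
    (h : pebblingNumber Γ ≤ ∑ u, c u) : CanReach Γ c (Pi.single r 1) := by
  have hπ : pebblingNumber Γ ∈ {k | ∀ c : V → ℕ, ∑ v, c v = k → ∀ r, Solvable Γ c r} :=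
    Nat.sInf_mem ⟨_, fun c hc r => nsolvable_iff_canReach.2
      (canReach_single_of_card_mul_le hΓ r (t := 1) hc.ge)⟩
  obtain ⟨c₀, hc₀, hs⟩ := exists_le_sum_eq h
  exact (nsolvable_iff_canReach.1 (hπ c₀ hs r)).mono hc₀ le_rfl

lemma canReach_single_of_mul_pebblingNumber_le (hΓ : Γ.Connected) {c : V → ℕ} (r : V) {t : ℕ}
    (h : t * pebblingNumber Γ ≤ ∑ u, c u) : CanReach Γ c (Pi.single r t) := by
  induction t generalizing c with
  | zero => exact CanReach.of_le (by simp)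
  | succ t ih =>
    obtain ⟨c₀, hc₀, hs⟩ := exists_le_sum_eq (c := c) (m := pebblingNumber Γ)
      (by rw [add_mul] at h; omega)
    have hrest : t * pebblingNumber Γ ≤ ∑ u, (c - c₀) u := by
      rw [sum_tsub_apply hc₀, add_mul] at *
      omega
    have := (canReach_single_one_of_pebblingNumber_le hΓ r hs.ge).add (ih hrest)
    rwa [add_tsub_cancel_of_le hc₀, ← Pi.single_add, add_comm 1] at this

lemma card_le_pebblingNumber (hΓ : Γ.Connected) : Fintype.card V ≤ pebblingNumber Γ := by
  refine le_csInf ⟨_, fun c hc r => nsolvable_iff_canReach.2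
      (canReach_single_of_card_mul_le hΓ r (t := 1) hc.ge)⟩ fun k hk => ?_
  by_contra! hlt
  obtain ⟨r⟩ := hΓ.nonempty
  let b : V → ℕ := fun u => if u = r then 0 else 1
  have hb : ∑ u, b u = Fintype.card V - 1 := by
    simp [b, Finset.sum_ite, Finset.filter_ne', Finset.card_erase_of_mem]
  obtain ⟨c₀, hc₀, hs⟩ := exists_le_sum_eq (c := b) (m := k) (by omega)
  have hc₀1 : ∀ u, c₀ u ≤ 1 := fun u => le_trans (hc₀ u) (by by_cases hu : u = r <;> simp [b, hu])
  have := Pi.single_le_iff.1 ((nsolvable_iff_canReach.1 (hk c₀ hs r)).le_of_le_one hc₀1)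
  simpa [b] using this.trans (hc₀ r)

lemma canReach_two_of_twoPebblingNumber_le (hΓ : Γ.Connected) {c : V → ℕ} (r : V)
    (h : twoPebblingNumber Γ (univ.filter fun u => 1 ≤ c u).card ≤ ∑ u, c u) :
    CanReach Γ c (Pi.single r 2) := by
  have hπ := Nat.sInf_mem (s := {m | ∀ (r : V) (c' : V → ℕ), m ≤ ∑ v, c' v →
      (univ.filter fun v => 1 ≤ c' v).card = (univ.filter fun u => 1 ≤ c u).card →
      NSolvable Γ c' r 2})
    ⟨_, fun r c' hc _ =>
      nsolvable_iff_canReach.2 (canReach_single_of_card_mul_le hΓ r (t := 2) hc)⟩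
  exact nsolvable_iff_canReach.1 (hπ r c h rfl)

lemma le_twoPebblingNumber (hΓ : Γ.Connected) {s : ℕ} (hs : s ≤ Fintype.card V) :
    s ≤ twoPebblingNumber Γ s := by
  refine le_csInf ⟨_, fun r c hc _ => nsolvable_iff_canReach.2
      (canReach_single_of_card_mul_le hΓ r (t := 2) hc)⟩ fun m hm => ?_
  by_contra! hlt
  obtain ⟨r⟩ := hΓ.nonempty
  obtain ⟨T, -, hT⟩ := Finset.exists_subset_card_eq hs
  let b : V → ℕ := fun u => if u ∈ T then 1 else 0
  have hb1 : ∀ u, b u ≤ 1 := fun u => by by_cases hu : u ∈ T <;> simp [b, hu]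
  have hsupp : (univ.filter fun u => 1 ≤ b u) = T := by
    ext u; by_cases hu : u ∈ T <;> simp [b, hu]
  have hsum : ∑ u, b u = s := by simp [b, hT]
  have := Pi.single_le_iff.1
    ((nsolvable_iff_canReach.1 (hm r b (by omega) (by rw [hsupp, hT]))).le_of_le_one hb1)
  exact absurd (this.trans (hb1 r)) (by norm_num)

lemma twoPebblingNumber'_eq_of_le_sum (hΓ : Γ.Connected) {c : V → ℕ}
    (h : twoPebblingNumber' Γ (univ.filter fun u => 1 ≤ c u).card ≤ ∑ u, c u) :
    twoPebblingNumber' Γ (univ.filter fun u => 1 ≤ c u).card =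
      twoPebblingNumber Γ (univ.filter fun u => 1 ≤ c u).card := by
  refine if_neg fun h0 => ?_
  have hc : ∑ u, c u = 0 := Finset.sum_eq_zero fun u _ => by
    by_contra hu
    exact Finset.card_ne_zero.2 ⟨u, by simp; omega⟩ h0
  have := Fintype.card_pos_iff.2 hΓ.nonempty
  have := card_le_pebblingNumber hΓ
  rw [twoPebblingNumber', if_pos h0] at h
  omega

end PebblingNumber

section Splitting

variable {ι : Type*} [Fintype V]

lemma exists_sum_le_of_sum_le (s : Finset ι) (T : ι → ℕ) {f : V → ℕ}
    (h : ∑ j ∈ s, T j ≤ ∑ u, f u) :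
    ∃ g : ι → V → ℕ, ∑ j ∈ s, g j ≤ f ∧ ∀ j ∈ s, ∑ u, g j u = T j := by
  classical
  induction s using Finset.induction_on generalizing f with
  | empty => exact ⟨0, by simp, by simp⟩
  | insert a s ha ih =>
    rw [Finset.sum_insert ha] at h
    obtain ⟨ga, hga, hsa⟩ := exists_le_sum_eq (c := f) (m := T a) (by omega)
    have hrest : ∑ j ∈ s, T j ≤ ∑ u, (f - ga) u := by
      rw [sum_tsub_apply hga]
      omega
    obtain ⟨g, hg, hs⟩ := ih hrest
    have hgs : ∀ j ∈ s, Function.update g a ga j = g j := fun j hj =>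
      Function.update_of_ne (ne_of_mem_of_not_mem hj ha) _ _
    refine ⟨Function.update g a ga, ?_, fun j hj => ?_⟩
    · rw [Finset.sum_insert ha, Function.update_self, Finset.sum_congr rfl hgs]
      calc ga + ∑ j ∈ s, g j ≤ ga + (f - ga) := add_le_add_right hg ga
        _ = f := add_tsub_cancel_of_le hga
    · rcases Finset.mem_insert.1 hj with rfl | hj
      · simpa using hsa
      · rw [hgs j hj, hs j hj]

lemma sum_le_two_mul_sum_div_two_add_card (d : V → ℕ) :
    ∑ u, d u ≤ 2 * ∑ u, d u / 2 + Fintype.card V := by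
  calc ∑ u, d u ≤ ∑ u, (2 * (d u / 2) + 1) := Finset.sum_le_sum fun u _ => by omega
    _ = 2 * ∑ u, d u / 2 + Fintype.card V := by simp [Finset.sum_add_distrib, Finset.mul_sum]

lemma exists_two_nsmul_sum_le (s : Finset ι) (T : ι → ℕ) {d : V → ℕ}
    (h : 2 * ∑ j ∈ s, T j + Fintype.card V ≤ ∑ u, d u) :
    ∃ g : ι → V → ℕ, 2 • ∑ j ∈ s, g j ≤ d ∧ ∀ j ∈ s, ∑ u, g j u = T j := by
  have := sum_le_two_mul_sum_div_two_add_card d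
  obtain ⟨g, hg, hs⟩ := exists_sum_le_of_sum_le s T (f := fun u => d u / 2) (by omega)
  refine ⟨g, fun u => ?_, hs⟩
  have := hg u
  simp only [Pi.smul_apply, smul_eq_mul] at this ⊢
  omega

lemma exists_reserve_add_two_nsmul_add {cv : V → ℕ} (s : Finset ι) (T : ι → ℕ) {m K : ℕ}
    (hm : (univ.filter fun u => 1 ≤ cv u).card ≤ m) (hK : Fintype.card V ≤ K)
    (h : 2 * ∑ j ∈ s, T j + m + K ≤ ∑ u, cv u) :
    ∃ (c₀ e : V → ℕ) (g : ι → V → ℕ),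
      (univ.filter fun u => 1 ≤ c₀ u) = (univ.filter fun u => 1 ≤ cv u) ∧ ∑ u, c₀ u = m ∧
      (∀ j ∈ s, ∑ u, g j u = T j) ∧ K ≤ ∑ u, e u ∧ c₀ + 2 • ∑ j ∈ s, g j + e = cv := by
  obtain ⟨c₀, hc₀, hsupp, hm₀⟩ := exists_le_sum_eq_of_filter_one_le hm (by omega)
  have hd := sum_tsub_apply hc₀
  obtain ⟨g, hg, hgs⟩ := exists_two_nsmul_sum_le s T (d := cv - c₀) (by omega)
  have hpairs : ∑ u, (2 • ∑ j ∈ s, g j) u = 2 * ∑ j ∈ s, T j := by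
    simp only [Pi.smul_apply, Finset.sum_apply, smul_eq_mul, ← Finset.mul_sum]
    rw [Finset.sum_comm, Finset.sum_congr rfl hgs]
  refine ⟨c₀, cv - c₀ - 2 • ∑ j ∈ s, g j, g, hsupp, hm₀, hgs, ?_, ?_⟩
  · rw [sum_tsub_apply hg]
    omega
  · rw [add_assoc, add_tsub_cancel_of_le hg, add_tsub_cancel_of_le hc₀]

end Splitting

section BoxProd

variable {α β : Type*} [DecidableEq α] [DecidableEq β] {G : SimpleGraph α} {H : SimpleGraph β}

lemma canReach_single_of_column [Fintype β] (hH : H.Connected) (rG : α) (rH v : β)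
    (S : Finset β) {a b : ℕ} (h : pebblingNumber H ≤ a + S.card + b) :
    CanReach (G □ H) (Pi.single (rG, v) a + ∑ j ∈ S, Pi.single (rG, j) 1 + Pi.single (rG, v) b)
      (Pi.single (rG, rH) 1) := by
  have := (canReach_single_one_of_pebblingNumber_le hH rH
    (c := Pi.single v a + ∑ j ∈ S, Pi.single j 1 + Pi.single v b)
    (by simpa [Finset.sum_add_distrib, Finset.sum_apply] using h)).map (G.boxProdRight H rG).toHom
  simpa [map_add, map_sum, pushforward_single] using this

variable [Fintype α]

lemma sum_pushforward_slice_le (J : Finset β) (c : α × β → ℕ) :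
    ∑ j ∈ J, pushforward (·, j) (fun i => c (i, j)) ≤ c := by
  rintro ⟨i, j'⟩
  simp only [pushforward_apply, Finset.sum_apply, Pi.single_apply, Prod.ext_iff, ite_and,
    Finset.sum_ite_eq, Finset.mem_univ, if_true]
  split_ifs <;> simp

lemma canReach_slice_add_pairs (hG : G.Connected) (rG : α) {v j : β} (hvj : H.Adj v j)
    {f cj : α → ℕ} (h : pebblingNumber G ≤ ∑ i, f i + ∑ i, cj i) :
    CanReach (G □ H) (pushforward (·, v) (2 • f) + pushforward (·, j) cj)
      (Pi.single (rG, j) 1) := by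
  have hcross : CanReach (G □ H) (pushforward (·, v) (2 • f)) (pushforward (·, j) f) :=
    canReach_pushforward_two_nsmul (φ := (·, v)) (ψ := (·, j))
      (fun _ => boxProd_adj.2 (Or.inr ⟨hvj, rfl⟩)) f
  have hplace := (canReach_single_one_of_pebblingNumber_le hG rG (c := f + cj)
    (by simpa [Finset.sum_add_distrib] using h)).map (G.boxProdLeft H j).toHom
  rw [map_add, pushforward_single] at hplace
  exact (hcross.add (CanReach.of_le le_rfl)).trans hplace

lemma pushforward_reserve_add_pairs_add_le {v : β} {S : Finset β} (hvS : v ∉ S)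
    {c : α × β → ℕ} {c₀ e : α → ℕ} {g : β → α → ℕ}
    (hcv : c₀ + 2 • ∑ j ∈ S, g j + e = fun i => c (i, v)) :
    pushforward (·, v) c₀ + ∑ j ∈ S, (pushforward (·, v) (2 • g j) +
      pushforward (·, j) (fun i => c (i, j))) + pushforward (·, v) e ≤ c := by
  calc _ = ∑ j ∈ insert v S, pushforward (·, j) (fun i => c (i, j)) := by
        rw [Finset.sum_insert hvS, ← hcv]
        simp only [map_add, map_nsmul, map_sum, Finset.sum_add_distrib, Finset.smul_sum]
        abel
    _ ≤ c := sum_pushforward_slice_le _ c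

end BoxProd

end Pebbling

/-- constraint A.5(K, v, S) is valid: if `S` is a set of neighbors of `v` in
`H` with `1 ≤ |S| ≤ π(H) - 3`, and slice `G_v` holds at least
`2·Σ_{j∈S}(π(G) - extra_j) + π₂(G, s_v) + (π(H) - 2 - |S|)·π(G)` pebbles, then the
configuration is solvable. -/
theorem stmt7 {α β : Type*} [Fintype α] [Fintype β]
    (G : SimpleGraph α) (H : SimpleGraph β) (hG : G.Connected) (hH : H.Connected)
    (c : α × β → ℕ) (rG : α) (rH : β)
    (v : β) (S : Finset β) (hS : ∀ j ∈ S, H.Adj v j)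
    (hcard1 : 1 ≤ S.card) (hcard2 : S.card ≤ pebblingNumber H - 3)
    (h : 2 * (∑ j ∈ S, (pebblingNumber G - (∑ i : α, c (i, j)) % pebblingNumber G))
        + twoPebblingNumber' G ((Finset.univ.filter fun i : α => 1 ≤ c (i, v)).card)
        + (pebblingNumber H - 2 - S.card) * pebblingNumber G
        ≤ ∑ i : α, c (i, v)) :
    Solvable (G.boxProd H) c (rG, rH) := by
  classical
  have hvS : v ∉ S := fun hv => (hS v hv).ne rfl
  have hK : Fintype.card α ≤ (pebblingNumber H - 2 - S.card) * pebblingNumber G :=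
    (card_le_pebblingNumber hG).trans (Nat.le_mul_of_pos_left _ (by omega))
  rw [twoPebblingNumber'_eq_of_le_sum hG (c := fun i => c (i, v)) (by omega)] at h
  obtain ⟨c₀, e, g, hsupp, hc₀, hg, he, hcv⟩ :=
    exists_reserve_add_two_nsmul_add S _ (le_twoPebblingNumber hG (card_le_univ _)) hK h
  have reserve := (canReach_two_of_twoPebblingNumber_le hG rG (c := c₀)
    (by rw [hsupp, hc₀])).map (G.boxProdLeft H v).toHom
  have rest := (canReach_single_of_mul_pebblingNumber_le hG rG he).map (G.boxProdLeft H v).toHom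
  rw [pushforward_single] at reserve rest
  have cross : ∀ j ∈ S, CanReach (G □ H) (pushforward (·, v) (2 • g j) +
      pushforward (·, j) (fun i => c (i, j))) (Pi.single (rG, j) 1) := fun j hj =>
    canReach_slice_add_pairs hG rG (hS j hj) (by
      rw [hg j hj]
      have := Nat.mod_le (∑ i, c (i, j)) (pebblingNumber G)
      omega)
  refine nsolvable_iff_canReach.2
    (CanReach.mono ?_ (pushforward_reserve_add_pairs_add_le hvS hcv) le_rfl)
  exact ((reserve.add (CanReach.sum S cross)).add rest).trans
    (canReach_single_of_column hH rG rH v S (by omega))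
end

section
/- Let G and H be finite connected simple graphs, fix a root (r_G, r_H) of G□H, and let p_0 = r_H, p_1, …, p_α be a path in H (p_{i} adjacent to p_{i+1} in H) of edge length α ≥ 1. Let c be a pebbling configuration on G□H such that c̃_{p_i} ≥ |V(G)| for each i = 1, …, α and Σ_{i=1}^{α} 2^{α−i}·(c̃_{p_i} − |V(G)|) ≥ 2^{α}·(π(G) − c̃_{r_H}). Then c is (r_G, r_H)-solvable. -/
/-!
Pebbles are pushed towards the root slice along the path, one slice at a time: each vertex
`(g, p (i+1))` sends `⌊c/2⌋` pebbles to `(g, p i)`, so a slice holding `T` pebbles passes on at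
least `(T - |V(G)|)/2` of them. Hence `2^a c̃_{p 0} + Σ_{i=1}^{a} 2^(a-i) (c̃_{p i} - |V(G)|)` is
at most `2^a` times the number of pebbles that finally sit on the root slice, which therefore
holds at least `π(G)` of them; pebbling inside that copy of `G` reaches the root.
-/

open SimpleGraph Finset

open Relation

section Pebbling

variable {V : Type*} {G : SimpleGraph V}

theorem PebblingMove.exists_le_of_le {c c' d : V → ℕ} (h : PebblingMove G c c') (hcd : c ≤ d) :
    ∃ d', PebblingMove G d d' ∧ c' ≤ d' := by
  obtain ⟨v, w, hadj, hv2, hv, hw, hu⟩ := h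
  have hle (u : V) : c u ≤ d u := hcd u
  refine ⟨fun u => c' u + (d u - c u),
    ⟨v, w, hadj, hv2.trans (hle v), ?_, ?_, fun u huv huw => ?_⟩, fun u => Nat.le_add_right _ _⟩
  · have := hle v; dsimp only; omega
  · have := hle w; dsimp only; omega
  · have := hle u; have := hu u huv huw; dsimp only; omega

theorem NSolvable.mono {c d : V → ℕ} {r : V} {t : ℕ} (h : NSolvable G c r t) (hcd : c ≤ d) :
    NSolvable G d r t := by
  obtain ⟨c', hreach, ht⟩ := h
  suffices ∃ d', ReflTransGen (PebblingMove G) d d' ∧ c' ≤ d' by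
    obtain ⟨d', hd, hle⟩ := this
    exact ⟨d', hd, ht.trans (hle r)⟩
  clear ht
  induction hreach with
  | refl => exact ⟨d, .refl, hcd⟩
  | tail _ hmove ih =>
    obtain ⟨d₁, hd₁, hle₁⟩ := ih
    obtain ⟨d₂, hmove₂, hle₂⟩ := hmove.exists_le_of_le hle₁
    exact ⟨d₂, hd₁.tail hmove₂, hle₂⟩

theorem exists_reflTransGen_edge_transfer {v w : V} (hadj : G.Adj v w) (t : ℕ) {c : V → ℕ}
    (hc : 2 * t ≤ c v) :
    ∃ c', ReflTransGen (PebblingMove G) c c' ∧ c' v = c v - 2 * t ∧ c' w = c w + t ∧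
      ∀ u, u ≠ v → u ≠ w → c' u = c u := by
  classical
  induction t with
  | zero => exact ⟨c, .refl, rfl, rfl, fun _ _ _ => rfl⟩
  | succ t ih =>
    obtain ⟨c₁, hreach, hv, hw, hu⟩ := ih (by omega)
    let c₂ : V → ℕ := fun u => if u = v then c₁ v - 2 else if u = w then c₁ w + 1 else c₁ u
    have hmove : PebblingMove G c₁ c₂ :=
      ⟨v, w, hadj, by omega, by simp [c₂], by simp [c₂, hadj.ne.symm],
        fun u huv huw => by simp [c₂, huv, huw]⟩
    refine ⟨c₂, hreach.tail hmove, ?_, ?_, fun u huv huw => ?_⟩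
    · simp only [c₂, if_pos rfl]; omega
    · simp only [c₂, if_neg hadj.ne.symm, ↓reduceIte]; omega
    · simp only [c₂, if_neg huv, if_neg huw, hu u huv huw]

theorem solvable_of_walk {v r : V} (w : G.Walk v r) {c : V → ℕ} (hc : 2 ^ w.length ≤ c v) :
    Solvable G c r := by
  induction w generalizing c with
  | nil => exact ⟨c, .refl, by simpa using hc⟩
  | cons hadj w ih =>
    rw [SimpleGraph.Walk.length_cons, pow_succ] at hc
    obtain ⟨c₁, hreach₁, -, hw, -⟩ :=
      exists_reflTransGen_edge_transfer hadj (2 ^ w.length) (c := c) (by omega)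
    obtain ⟨c₂, hreach₂, hr⟩ := ih (c := c₁) (by rw [hw]; omega)
    exact ⟨c₂, hreach₁.trans hreach₂, hr⟩

variable [Fintype V]

theorem solvable_of_sum_eq_succ {k : ℕ}
    (hk : ∀ c : V → ℕ, ∑ v, c v = k → ∀ r, Solvable G c r)
    {c : V → ℕ} (hc : ∑ v, c v = k + 1) (r : V) : Solvable G c r := by
  classical
  obtain ⟨v, -, hv⟩ := Finset.exists_ne_zero_of_sum_ne_zero (s := Finset.univ) (f := c) (by omega)
  have hsum : ∑ u, Function.update c v (c v - 1) u = k := by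
    have := Finset.add_sum_erase Finset.univ c (Finset.mem_univ v)
    rw [Finset.sum_update_of_mem (Finset.mem_univ v), ← Finset.erase_eq]
    omega
  refine (hk _ hsum r).mono fun u => ?_
  rcases eq_or_ne u v with rfl | huv
  · simp
  · simp [huv]

theorem solvable_of_sum_eq_pebblingNumber (hG : G.Connected) {c : V → ℕ}
    (hc : ∑ v, c v = pebblingNumber G) (r : V) : Solvable G c r := by
  classical
  refine Nat.sInf_mem (s := {k | ∀ c : V → ℕ, ∑ v, c v = k → ∀ r, Solvable G c r})
    ⟨Fintype.card V * 2 ^ (Fintype.card V - 1), fun c hc r => ?_⟩ c hc r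
  obtain ⟨v, -, hv⟩ := Finset.exists_le_of_sum_le (Finset.univ_nonempty_iff.2 ⟨r⟩)
    (f := fun _ => 2 ^ (Fintype.card V - 1)) (g := c) (by simp [hc])
  obtain ⟨w⟩ := hG.preconnected v r
  have hlen := w.toPath.2.length_lt
  exact solvable_of_walk w.toPath.1 ((Nat.pow_le_pow_right two_pos (by omega)).trans hv)

theorem solvable_of_pebblingNumber_le_sum (hG : G.Connected) {c : V → ℕ}
    (hc : pebblingNumber G ≤ ∑ v, c v) (r : V) : Solvable G c r :=
  Nat.le_induction (P := fun k _ => ∀ c : V → ℕ, ∑ v, c v = k → ∀ r, Solvable G c r)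
    (fun _ => solvable_of_sum_eq_pebblingNumber hG) (fun _ _ ih _ => solvable_of_sum_eq_succ ih)
    _ hc c rfl r

end Pebbling

/-- The weighted pebble count `2^a e₀ + Σ_{i=1}^{a} 2^(a-i) (eᵢ - n)` of a path with slice totals
`eᵢ`, taken in `ℤ` so that the differences `eᵢ - n` are not truncated. -/
def pathPotential (n : ℕ) (e : ℕ → ℕ) : ℕ → ℤ
  | 0 => e 0
  | a + 1 => 2 * pathPotential n e a + ((e (a + 1) : ℤ) - n)

theorem pathPotential_add_sub_le {n a : ℕ} {e e' : ℕ → ℕ} (h : ∀ i ≤ a, e i ≤ e' i) :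
    pathPotential n e a + ((e' a : ℤ) - e a) ≤ pathPotential n e' a := by
  induction a with
  | zero => simp [pathPotential]
  | succ a ih =>
    have := ih fun i hi => h i (by omega)
    have := h a (by omega)
    have := h (a + 1) le_rfl
    simp only [pathPotential]
    omega

theorem pathPotential_eq {n a : ℕ} {e : ℕ → ℕ} (h : ∀ i, 1 ≤ i → i ≤ a → n ≤ e i) :
    pathPotential n e a =
      ((2 ^ a * e 0 + ∑ i ∈ Finset.Icc 1 a, 2 ^ (a - i) * (e i - n) : ℕ) : ℤ) := by
  induction a with
  | zero => simp [pathPotential]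
  | succ a ih =>
    have hsum : ∑ i ∈ Finset.Icc 1 a, 2 ^ (a + 1 - i) * (e i - n) =
        2 * ∑ i ∈ Finset.Icc 1 a, 2 ^ (a - i) * (e i - n) := by
      rw [Finset.mul_sum]
      refine Finset.sum_congr rfl fun i hi => ?_
      rw [Finset.mem_Icc] at hi
      rw [show a + 1 - i = a - i + 1 by omega, pow_succ]
      ring
    have := h (a + 1) (by omega) le_rfl
    rw [pathPotential, ih fun i hi hia => h i hi (by omega), Finset.sum_Icc_succ_top (by omega),
      hsum]
    push_cast [Nat.cast_sub this, Nat.sub_self]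
    ring

section BoxProd

variable {α β : Type*} {G : SimpleGraph α} {H : SimpleGraph β}

theorem Solvable.boxProd_of_slice {c : α × β → ℕ} {r : α} {q : β}
    (h : Solvable G (fun g => c (g, q)) r) : Solvable (G.boxProd H) c (r, q) := by
  classical
  obtain ⟨d, hreach, hd⟩ := h
  let embed (e : α → ℕ) (x : α × β) : ℕ := if x.2 = q then e x.1 else c x
  have hmove (e e' : α → ℕ) (h : PebblingMove G e e') :
      PebblingMove (G.boxProd H) (embed e) (embed e') := by
    obtain ⟨v, w, hadj, h2, hv, hw, hu⟩ := h
    refine ⟨(v, q), (w, q), Or.inl ⟨hadj, rfl⟩, by simpa [embed] using h2,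
      by simp [embed, hv], by simp [embed, hw], ?_⟩
    rintro ⟨u, q'⟩ huv huw
    by_cases hq : q' = q
    · subst hq
      simp [embed, hu u (fun h => huv (by rw [h])) (fun h => huw (by rw [h]))]
    · simp [embed, hq]
  have hc : embed (fun g => c (g, q)) = c := by
    funext ⟨g, q'⟩
    by_cases hq : q' = q
    · subst hq; simp [embed]
    · simp [embed, hq]
  have hlift := ReflTransGen.lift embed hmove _ _ hreach
  rw [Function.onFun, hc] at hlift
  exact ⟨embed d, hlift, by simpa [embed] using hd⟩

theorem exists_reflTransGen_slice_transfer [Fintype α] {q q' : β} (hq : H.Adj q q')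
    (c : α × β → ℕ) :
    ∃ c', ReflTransGen (PebblingMove (G.boxProd H)) c c' ∧ (∀ x, x.2 ≠ q → c x ≤ c' x) ∧
      ∀ g, c (g, q') + c (g, q) / 2 ≤ c' (g, q') := by
  classical
  suffices ∀ s : Finset α, ∃ c', ReflTransGen (PebblingMove (G.boxProd H)) c c' ∧
      (∀ x, x.2 ≠ q → c x ≤ c' x) ∧ (∀ g ∉ s, c' (g, q) = c (g, q)) ∧
      ∀ g ∈ s, c (g, q') + c (g, q) / 2 ≤ c' (g, q') by
    obtain ⟨c', hreach, hle, -, hgain⟩ := this Finset.univ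
    exact ⟨c', hreach, hle, fun g => hgain g (Finset.mem_univ g)⟩
  intro s
  induction s using Finset.induction_on with
  | empty => exact ⟨c, .refl, fun _ _ => le_rfl, fun _ _ => rfl, by simp⟩
  | @insert g s hgs ih =>
    obtain ⟨c₁, hreach₁, hle₁, hsrc₁, hgain₁⟩ := ih
    obtain ⟨c₂, hreach₂, -, hw, hu⟩ := exists_reflTransGen_edge_transfer
      (show (G.boxProd H).Adj (g, q) (g, q') from Or.inr ⟨hq, rfl⟩) (c (g, q) / 2) (c := c₁)
      (by rw [hsrc₁ g hgs]; omega)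
    have hle₂ (x : α × β) (hx : x ≠ (g, q)) : c₁ x ≤ c₂ x := by
      by_cases hxw : x = (g, q')
      · subst hxw; omega
      · exact (hu x hx hxw).ge
    refine ⟨c₂, hreach₁.trans hreach₂, fun x hx => (hle₁ x hx).trans
      (hle₂ x fun h => hx (by rw [h])), fun g' hg' => ?_, fun g' hg' => ?_⟩
    · rw [Finset.mem_insert, not_or] at hg'
      rw [hu _ (by simp [hg'.1]) (by simp [hq.ne]), hsrc₁ g' hg'.2]
    · rcases Finset.mem_insert.1 hg' with rfl | hg'
      · have := hle₁ (g', q') hq.ne.symm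
        omega
      · have := hgain₁ g' hg'
        have := hle₂ (g', q') (by simp [hq.ne'])
        omega

theorem sum_le_two_mul_sum_div_two_add_card_s11 [Fintype α] (f : α → ℕ) :
    ∑ g, f g ≤ 2 * ∑ g, f g / 2 + Fintype.card α := by
  calc ∑ g, f g ≤ ∑ g, (2 * (f g / 2) + 1) := Finset.sum_le_sum fun g _ => by omega
    _ = 2 * ∑ g, f g / 2 + Fintype.card α := by
      rw [Finset.sum_add_distrib, ← Finset.mul_sum, Finset.sum_const, Finset.card_univ,
        smul_eq_mul, mul_one]

theorem exists_reflTransGen_pathPotential_le [Fintype α] (p : ℕ → β) (a : ℕ)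
    (hpath : ∀ i < a, H.Adj (p i) (p (i + 1))) (hinj : ∀ i ≤ a, ∀ j ≤ a, p i = p j → i = j)
    (c : α × β → ℕ) :
    ∃ c', ReflTransGen (PebblingMove (G.boxProd H)) c c' ∧
      pathPotential (Fintype.card α) (fun i => ∑ g, c (g, p i)) a ≤ 2 ^ a * ∑ g, c' (g, p 0) := by
  induction a generalizing c with
  | zero => exact ⟨c, .refl, by simp [pathPotential]⟩
  | succ a ih =>
    obtain ⟨c₁, hreach₁, hle₁, hgain₁⟩ :=
      exists_reflTransGen_slice_transfer (G := G) (hpath a a.lt_succ_self).symm c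
    obtain ⟨c', hreach', hpot'⟩ := ih (fun i hi => hpath i (by omega))
      (fun i hi j hj => hinj i (by omega) j (by omega)) c₁
    have hslices : ∀ i ≤ a, ∑ g, c (g, p i) ≤ ∑ g, c₁ (g, p i) := fun i hi =>
      Finset.sum_le_sum fun g _ => hle₁ _ fun h => by
        have := hinj i (by omega) (a + 1) le_rfl h
        omega
    have hgain : ∑ g, c (g, p a) + ∑ g, c (g, p (a + 1)) / 2 ≤ ∑ g, c₁ (g, p a) := by
      rw [← Finset.sum_add_distrib]
      exact Finset.sum_le_sum fun g _ => hgain₁ g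
    have hhalf := sum_le_two_mul_sum_div_two_add_card_s11 fun g => c (g, p (a + 1))
    have := pathPotential_add_sub_le (n := Fintype.card α) hslices
    refine ⟨c', hreach₁.trans hreach', ?_⟩
    simp only [pathPotential] at this ⊢
    rw [pow_succ', mul_assoc]
    omega

end BoxProd

theorem stmt11_general {α β : Type*} [Fintype α]
    (G : SimpleGraph α) (H : SimpleGraph β) (hG : G.Connected)
    (c : α × β → ℕ) (rG : α) (rH : β)
    (a : ℕ) (p : ℕ → β) (hp0 : p 0 = rH)
    (hpath : ∀ i < a, H.Adj (p i) (p (i + 1)))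
    (hinj : ∀ i ≤ a, ∀ j ≤ a, p i = p j → i = j)
    (hsat : ∀ i, 1 ≤ i → i ≤ a → Fintype.card α ≤ ∑ i' : α, c (i', p i))
    (hsum : 2 ^ a * (pebblingNumber G - ∑ i' : α, c (i', rH))
        ≤ ∑ i ∈ Finset.Icc 1 a, 2 ^ (a - i) * ((∑ i' : α, c (i', p i)) - Fintype.card α)) :
    Solvable (G.boxProd H) c (rG, rH) := by
  obtain ⟨c', hreach, hpot⟩ := exists_reflTransGen_pathPotential_le (G := G) p a hpath hinj c
  rw [pathPotential_eq hsat, hp0] at hpot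
  have hroot : pebblingNumber G ≤ ∑ g, c' (g, rH) := by
    refine Nat.le_of_mul_le_mul_left ?_ (pow_pos two_pos a)
    have := Nat.mul_le_mul_left (2 ^ a) (le_tsub_add (b := pebblingNumber G) (a := ∑ g, c (g, rH)))
    rw [mul_add] at this
    norm_cast at hpot
    omega
  obtain ⟨c'', hreach', hroot'⟩ :=
    (solvable_of_pebblingNumber_le_sum hG hroot rG).boxProd_of_slice (H := H)
  exact ⟨c'', hreach.trans hreach', hroot'⟩

/-- constraint B.3(K, P) is valid: given a path `r_H = p 0 ~ p 1 ~ ⋯ ~ p a`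
in `H` (`a ≥ 1`) whose non-root slices are all 1-saturated, if
`Σ_{i=1}^{a} 2^{a-i}·(c̃_{p i} - |V(G)|) ≥ 2^a·(π(G) - c̃_{r_H})`, then the configuration
is solvable. -/
theorem stmt11 {α β : Type*} [Fintype α] [Fintype β]
    (G : SimpleGraph α) (H : SimpleGraph β) (hG : G.Connected) (hH : H.Connected)
    (c : α × β → ℕ) (rG : α) (rH : β)
    (a : ℕ) (ha : 1 ≤ a) (p : ℕ → β) (hp0 : p 0 = rH)
    (hpath : ∀ i < a, H.Adj (p i) (p (i + 1)))
    (hinj : ∀ i ≤ a, ∀ j ≤ a, p i = p j → i = j)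
    (hsat : ∀ i, 1 ≤ i → i ≤ a → Fintype.card α ≤ ∑ i' : α, c (i', p i))
    (hsum : 2 ^ a * (pebblingNumber G - ∑ i' : α, c (i', rH))
        ≤ ∑ i ∈ Finset.Icc 1 a, 2 ^ (a - i) * ((∑ i' : α, c (i', p i)) - Fintype.card α)) :
    Solvable (G.boxProd H) c (rG, rH) :=
  stmt11_general G H hG c rG rH a p hp0 hpath hinj hsat hsum
end
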